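/- Let n ≥ 2 and let A_{2n+1} : V_{2n} → GF(2) be defined by A_{2n+1}(y) = M_{2n+1}(0,y), where (0,y) denotes prepending the bit 0 to y. Then N(A_{2n+1}) = N(M_{2n}) = wt(A_{2n+1}); that is, the nonlinearity of A_{2n+1} equals both the nonlinearity of the majority function M_{2n} and the weight of A_{2n+1}. -/
import Mathlib


open Finset

/-- Hamming weight of a vector in `V_N = (Fin N → ZMod 2)`. -/
def wtV {N : ℕ} (x : Fin N → ZMod 2) : ℕ :=
  (Finset.univ.filter (fun i => x i = 1)).card

/-- Hamming weight of a Boolean function `f : V_N → GF(2)`. -/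
def wtF {N : ℕ} (f : (Fin N → ZMod 2) → ZMod 2) : ℕ :=
  (Finset.univ.filter (fun x => f x = 1)).card

/-- `a` is affine: `a x = w · x + b` for some `w ∈ V_N`, `b ∈ GF(2)`. -/
def IsAffine {N : ℕ} (a : (Fin N → ZMod 2) → ZMod 2) : Prop :=
  ∃ w : Fin N → ZMod 2, ∃ b : ZMod 2, ∀ x, a x = (∑ i, w i * x i) + b

/-- Hamming distance `d(f,g) = wt(f + g)`. -/
def hdist {N : ℕ} (f g : (Fin N → ZMod 2) → ZMod 2) : ℕ :=
  wtF (fun x => f x + g x)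

/-- Nonlinearity: minimum distance to affine functions. -/
noncomputable def nlin {N : ℕ} (f : (Fin N → ZMod 2) → ZMod 2) : ℕ :=
  sInf {d : ℕ | ∃ a, IsAffine a ∧ d = hdist f a}

/-- Threshold (majority-type) function: `maj N t x = 1` iff `wt(x) ≥ t`.
So `M_{2n+1} = maj (2n+1) (n+1)` and `M_{2n} = maj (2n) n`. -/
def maj (N t : ℕ) (x : Fin N → ZMod 2) : ZMod 2 :=
  if t ≤ wtV x then 1 else 0

/-! ### Auxiliary lemmas -/

lemma zmod2_cases (a : ZMod 2) : a = 0 ∨ a = 1 := by revert a; decide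

lemma wt_eq_sum {N} (x : Fin N → ZMod 2) : wtV x = ∑ i, if x i = 1 then 1 else 0 := by
  rw [wtV, Finset.card_filter]

lemma wt_le {N} (x : Fin N → ZMod 2) : wtV x ≤ N := by
  simpa [wtV] using (Finset.card_filter_le univ (fun i => x i = 1))

lemma wt_cons0 {N} (y : Fin N → ZMod 2) : wtV (Fin.cons (0:ZMod 2) y) = wtV y := by
  rw [wt_eq_sum, wt_eq_sum, Fin.sum_univ_succ]
  simp

lemma wt_compl {N} (x : Fin N → ZMod 2) : wtV (fun i => x i + 1) = N - wtV x := by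
  have h : (univ.filter (fun i => x i + 1 = 1)) = univ \ (univ.filter (fun i => x i = 1)) := by
    ext i
    have h2 : x i + 1 = 1 ↔ ¬ (x i = 1) := by
      rcases zmod2_cases (x i) with h | h <;> simp [h]
    simp only [mem_filter, mem_sdiff, mem_univ, true_and]; exact h2
  rw [wtV, h, Finset.card_sdiff_of_subset (Finset.filter_subset _ _)]
  simp [wtV]

lemma wt_update_one {N} (x : Fin N → ZMod 2) (i0 : Fin N) (h : x i0 = 0) :
    wtV (Function.update x i0 1) = wtV x + 1 := by
  have hs : (univ.filter (fun i => Function.update x i0 1 i = 1))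
      = insert i0 (univ.filter (fun i => x i = 1)) := by
    ext i
    by_cases hi : i = i0 <;> simp [Function.update, hi]
  rw [wtV, hs, Finset.card_insert_of_notMem (by simp [h])]
  rfl

lemma wt_update_zero {N} (x : Fin N → ZMod 2) (i0 : Fin N) (h : x i0 = 1) :
    wtV (Function.update x i0 0) + 1 = wtV x := by
  have hs : (univ.filter (fun i => Function.update x i0 0 i = 1))
      = (univ.filter (fun i => x i = 1)).erase i0 := by
    ext i
    by_cases hi : i = i0 <;> simp [Function.update, hi]
  rw [wtV, hs, Finset.card_erase_of_mem (by simp [h])]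
  have hm : i0 ∈ univ.filter (fun i => x i = 1) := by simp [h]
  have hc : 1 ≤ (univ.filter (fun i => x i = 1)).card := Finset.card_pos.2 ⟨i0, hm⟩
  rw [wtV]; omega

lemma card_wt_support {N k : ℕ} (S : Finset (Fin N)) :
    (univ.filter (fun x : Fin N → ZMod 2 => (∀ i ∉ S, x i = 0) ∧ wtV x = k)).card
      = S.card.choose k := by
  rw [← Finset.card_powersetCard k S]
  apply Finset.card_bij' (fun x _ => univ.filter (fun i => x i = 1))
    (fun T _ => (fun i => if i ∈ T then 1 else 0))
  case hi =>
    intro x hx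
    simp only [mem_filter, mem_univ, true_and] at hx
    simp only [Finset.mem_powersetCard]
    refine ⟨?_, hx.2⟩
    intro i hi
    simp only [mem_filter, mem_univ, true_and] at hi
    by_contra hiS
    rw [hx.1 i hiS] at hi
    exact (by decide : (0:ZMod 2) ≠ 1) hi
  case hj =>
    intro T hT
    simp only [Finset.mem_powersetCard] at hT
    simp only [mem_filter, mem_univ, true_and]
    constructor
    · intro i hi
      rw [if_neg (fun h => hi (hT.1 h))]
    · rw [wtV]
      have h2 : (univ.filter (fun i => (if i ∈ T then (1:ZMod 2) else 0) = 1)) = T := by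
        ext i; by_cases hi : i ∈ T <;> simp [hi]
      rw [h2, hT.2]
  case left_inv =>
    intro x hx
    funext i
    by_cases hi : x i = 1
    · simp [hi]
    · simp only [mem_filter, mem_univ, true_and]
      rw [if_neg hi]
      rcases zmod2_cases (x i) with h | h
      · exact h.symm
      · exact absurd h hi
  case right_inv =>
    intro T hT
    ext i; by_cases hi : i ∈ T <;> simp [hi]

lemma card_wt {N k : ℕ} :
    (univ.filter (fun x : Fin N → ZMod 2 => wtV x = k)).card = N.choose k := by
  have h := card_wt_support (N := N) (k := k) univ
  rw [Finset.card_univ, Fintype.card_fin] at h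
  rw [← h]
  congr 1
  apply Finset.filter_congr
  intro x _
  constructor
  · intro hw
    exact ⟨fun i hi => absurd (Finset.mem_univ i) hi, hw⟩
  · exact fun h => h.2

lemma card_wt_zero_at {N k : ℕ} (i0 : Fin N) :
    (univ.filter (fun x : Fin N → ZMod 2 => x i0 = 0 ∧ wtV x = k)).card
      = (N - 1).choose k := by
  have h := card_wt_support (N := N) (k := k) (univ.erase i0)
  rw [Finset.card_erase_of_mem (Finset.mem_univ i0), Finset.card_univ, Fintype.card_fin] at h
  rw [← h]
  congr 1
  apply Finset.filter_congr
  intro x _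
  constructor
  · rintro ⟨h0, hw⟩
    refine ⟨fun i hi => ?_, hw⟩
    have hii : i = i0 := by
      by_contra hne
      exact hi (Finset.mem_erase.2 ⟨hne, Finset.mem_univ i⟩)
    rw [hii]; exact h0
  · rintro ⟨h0, hw⟩
    exact ⟨h0 i0 (by simp), hw⟩

lemma card_wt_one_at {N k : ℕ} (i0 : Fin N) :
    (univ.filter (fun x : Fin N → ZMod 2 => x i0 = 1 ∧ wtV x = k + 1)).card
      = (N - 1).choose k := by
  rw [← card_wt_zero_at (N := N) (k := k) i0]
  apply Finset.card_bij' (fun x _ => Function.update x i0 0) (fun y _ => Function.update y i0 1)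
  case hi =>
    intro x hx
    simp only [mem_filter, mem_univ, true_and] at hx ⊢
    refine ⟨Function.update_self .., ?_⟩
    have := wt_update_zero x i0 hx.1
    omega
  case hj =>
    intro y hy
    simp only [mem_filter, mem_univ, true_and] at hy ⊢
    refine ⟨Function.update_self .., ?_⟩
    have := wt_update_one y i0 hy.1
    omega
  case left_inv =>
    intro x hx
    simp only [mem_filter, mem_univ, true_and] at hx
    funext i
    by_cases hi : i = i0
    · subst hi; simp [hx.1]
    · simp [Function.update, hi]
  case right_inv =>
    intro y hy
    simp only [mem_filter, mem_univ, true_and] at hy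
    funext i
    by_cases hi : i = i0
    · subst hi; simp [hy.1]
    · simp [Function.update, hi]

lemma card_wt_lt {N t : ℕ} (ht : t ≤ N) :
    (univ.filter (fun x : Fin N → ZMod 2 => wtV x < t)).card
      = (univ.filter (fun x : Fin N → ZMod 2 => N - t < wtV x)).card := by
  apply Finset.card_bij' (fun x _ => (fun i => x i + 1)) (fun y _ => (fun i => y i + 1))
  case hi =>
    intro x hx
    simp only [mem_filter, mem_univ, true_and] at hx ⊢
    rw [wt_compl]
    have := wt_le x
    omega
  case hj =>
    intro y hy
    simp only [mem_filter, mem_univ, true_and] at hy ⊢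
    rw [wt_compl]
    have := wt_le y
    omega
  case left_inv =>
    intro x _; funext i
    rcases zmod2_cases (x i) with h | h <;> simp [h] <;> decide
  case right_inv =>
    intro y _; funext i
    rcases zmod2_cases (y i) with h | h <;> simp [h] <;> decide

/-- The flip involution. -/
def flip0 {N : ℕ} (i0 : Fin N) (x : Fin N → ZMod 2) : Fin N → ZMod 2 :=
  Function.update x i0 (x i0 + 1)

lemma flip0_flip0 {N} (i0 : Fin N) (x : Fin N → ZMod 2) : flip0 i0 (flip0 i0 x) = x := by
  funext i
  by_cases hi : i = i0
  · subst hi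
    simp only [flip0, Function.update_self]
    rcases zmod2_cases (x i) with h | h <;> rw [h] <;> decide
  · simp [flip0, Function.update, hi]

lemma affine_flip {N} (w : Fin N → ZMod 2) (b : ZMod 2) (i0 : Fin N) (hw : w i0 = 1)
    (x : Fin N → ZMod 2) :
    (∑ i, w i * flip0 i0 x i) + b = (((∑ i, w i * x i) + b) + 1) := by
  have key : ∀ i, w i * flip0 i0 x i
      = Function.update (fun j => w j * x j) i0 (x i0 + 1) i := by
    intro i
    by_cases hi : i = i0
    · subst hi; simp [flip0, hw]
    · simp [flip0, Function.update, hi]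
  rw [Finset.sum_congr rfl (fun i _ => key i)]
  rw [Finset.sum_update_of_mem (Finset.mem_univ i0)]
  have h2 : ∑ i, w i * x i
      = w i0 * x i0 + ∑ i ∈ univ \ {i0}, w i * x i := by
    rw [← Finset.sum_update_of_mem (Finset.mem_univ i0), Finset.sum_congr rfl]
    intro i _
    by_cases hi : i = i0
    · subst hi; simp
    · simp [Function.update, hi]
  rw [h2, hw]
  ring

lemma hdist_eq_card {N} (f a : (Fin N → ZMod 2) → ZMod 2) :
    hdist f a = (univ.filter (fun x => f x ≠ a x)).card := by
  rw [hdist, wtF]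
  congr 1
  apply Finset.filter_congr
  intro x _
  show f x + a x = 1 ↔ f x ≠ a x
  rcases zmod2_cases (f x) with h | h <;> rcases zmod2_cases (a x) with h2 | h2 <;>
    rw [h, h2] <;> decide

lemma hdist_congr {N} (f a a' : (Fin N → ZMod 2) → ZMod 2) (h : ∀ x, a x = a' x) :
    hdist f a = hdist f a' := by
  rw [hdist, hdist, wtF, wtF]
  congr 1
  apply Finset.filter_congr
  intro x _
  rw [h x]

lemma pairing_bound {N : ℕ} (f : (Fin N → ZMod 2) → ZMod 2) (w : Fin N → ZMod 2)
    (b : ZMod 2) (i0 : Fin N) (hw : w i0 = 1) :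
    2 ^ N ≤ 2 * hdist f (fun x => (∑ i, w i * x i) + b)
      + (univ.filter (fun x => f x ≠ f (flip0 i0 x))).card := by
  set a : (Fin N → ZMod 2) → ZMod 2 := fun x => (∑ i, w i * x i) + b with ha
  set D := univ.filter (fun x => f x ≠ a x) with hD
  set D2 := univ.filter (fun x => f (flip0 i0 x) ≠ a (flip0 i0 x)) with hD2
  set E := univ.filter (fun x : Fin N → ZMod 2 => f x = f (flip0 i0 x)) with hE
  have hcard2 : D2.card = D.card := by
    apply Finset.card_bij' (fun x _ => flip0 i0 x) (fun y _ => flip0 i0 y)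
    case hi =>
      intro x hx
      simp only [hD2, hD, mem_filter, mem_univ, true_and] at hx ⊢
      exact hx
    case hj =>
      intro y hy
      simp only [hD2, hD, mem_filter, mem_univ, true_and] at hy ⊢
      rw [flip0_flip0]
      exact hy
    case left_inv => intro x _; exact flip0_flip0 i0 x
    case right_inv => intro y _; exact flip0_flip0 i0 y
  have hsub : E ⊆ D ∪ D2 := by
    intro x hx
    simp only [hE, mem_filter, mem_univ, true_and] at hx
    simp only [Finset.mem_union, hD, hD2, mem_filter, mem_univ, true_and]
    by_cases hfa : f x = a x
    · right
      have hflip : a (flip0 i0 x) = a x + 1 := affine_flip w b i0 hw x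
      rw [hflip, ← hx, hfa]
      rcases zmod2_cases (a x) with h | h <;> rw [h] <;> decide
    · left; exact hfa
  have hE2 : E.card + (univ.filter (fun x => f x ≠ f (flip0 i0 x))).card
      = 2 ^ N := by
    have := Finset.card_filter_add_card_filter_not
      (s := univ) (p := fun x : Fin N → ZMod 2 => f x = f (flip0 i0 x))
    rw [Finset.card_univ] at this
    have hcu : Fintype.card (Fin N → ZMod 2) = 2 ^ N := by
      rw [Fintype.card_fun, ZMod.card, Fintype.card_fin]
    rw [hcu] at this
    rw [← this]
  have hEle : E.card ≤ D.card + D2.card :=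
    le_trans (Finset.card_le_card hsub) (Finset.card_union_le _ _)
  have hd : hdist f a = D.card := hdist_eq_card f a
  omega

lemma maj_delta {N s : ℕ} (i0 : Fin N) :
    (univ.filter (fun x : Fin N → ZMod 2 => maj N (s+1) x ≠ maj N (s+1) (flip0 i0 x))).card
      = 2 * (N - 1).choose s := by
  have hpt : ∀ x : Fin N → ZMod 2,
      (maj N (s+1) x ≠ maj N (s+1) (flip0 i0 x))
        ↔ ((x i0 = 0 ∧ wtV x = s) ∨ (x i0 = 1 ∧ wtV x = s + 1)) := by
    intro x
    rcases zmod2_cases (x i0) with h0 | h0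
    · have hσ : wtV (flip0 i0 x) = wtV x + 1 := by
        have : flip0 i0 x = Function.update x i0 1 := by
          rw [flip0, h0, (by decide : (0:ZMod 2)+1 = 1)]
        rw [this]; exact wt_update_one x i0 h0
      simp only [maj]
      rw [hσ]
      constructor
      · intro hne
        left
        refine ⟨h0, ?_⟩
        by_contra hws
        rcases Nat.lt_or_ge (wtV x) s with h | h
        · rw [if_neg (by omega), if_neg (by omega)] at hne; exact hne rfl
        · rw [if_pos (by omega), if_pos (by omega)] at hne; exact hne rfl
      · rintro (⟨-, hws⟩ | ⟨h1, -⟩)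
        · rw [if_neg (by omega), if_pos (by omega)]; decide
        · rw [h0] at h1; exact absurd h1 (by decide)
    · have hσ : wtV (flip0 i0 x) + 1 = wtV x := by
        have : flip0 i0 x = Function.update x i0 0 := by
          rw [flip0, h0, (by decide : (1:ZMod 2)+1 = 0)]
        rw [this]; exact wt_update_zero x i0 h0
      simp only [maj]
      rw [← hσ]
      constructor
      · intro hne
        right
        refine ⟨h0, ?_⟩
        by_contra hws
        rcases Nat.lt_or_ge (wtV x) (s+1) with h | h
        · rw [if_neg (by omega), if_neg (by omega)] at hne; exact hne rfl
        · rw [if_pos (by omega), if_pos (by omega)] at hne; exact hne rfl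
      · rintro (⟨h1, -⟩ | ⟨-, hws⟩)
        · rw [h0] at h1; exact absurd h1 (by decide)
        · rw [if_pos (by omega), if_neg (by omega)]; decide
  rw [Finset.filter_congr (fun x _ => hpt x), Finset.filter_or,
    Finset.card_union_of_disjoint, card_wt_zero_at i0, card_wt_one_at i0, two_mul]
  rw [Finset.disjoint_left]
  intro x hx1 hx2
  simp only [mem_filter, mem_univ, true_and] at hx1 hx2
  rw [hx1.1] at hx2
  exact absurd hx2.1 (by decide)

/-- The key lower bound: for `n ≤ t ≤ n+1`, the distance from `maj (2n) t` to any
affine function is at least `#{y : wt(y) ≥ n+1}`. -/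
lemma maj_dist_lb (n : ℕ) (hn : 2 ≤ n) (t : ℕ) (ht1 : n ≤ t) (ht2 : t ≤ n + 1)
    (f : (Fin (2*n) → ZMod 2) → ZMod 2) (hf : ∀ y, f y = maj (2*n) t y)
    (a : (Fin (2*n) → ZMod 2) → ZMod 2) (ha : IsAffine a) :
    (univ.filter (fun y : Fin (2*n) → ZMod 2 => n + 1 ≤ wtV y)).card ≤ hdist f a := by
  obtain ⟨w, b, hab⟩ := ha
  set P := (univ.filter (fun y : Fin (2*n) → ZMod 2 => n + 1 ≤ wtV y)).card with hP
  -- #{wt < n} = P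
  have hQP : (univ.filter (fun y : Fin (2*n) → ZMod 2 => wtV y < n)).card = P := by
    have h := card_wt_lt (N := 2*n) (t := n) (by omega)
    rw [h, hP]
    congr 1
    apply Finset.filter_congr
    intro y _
    constructor <;> intro hy <;> omega
  -- total count
  have htotal : P + P + (2*n).choose n = 2 ^ (2*n) := by
    have t1 := Finset.card_filter_add_card_filter_not
      (s := univ) (p := fun y : Fin (2*n) → ZMod 2 => wtV y < n)
    have hcu : (univ : Finset (Fin (2*n) → ZMod 2)).card = 2 ^ (2*n) := by
      rw [card_univ, Fintype.card_fun, ZMod.card, Fintype.card_fin]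
    rw [hcu] at t1
    have t2 : (univ.filter (fun y : Fin (2*n) → ZMod 2 => ¬ wtV y < n)).card
        = (2*n).choose n + P := by
      have heq : (univ.filter (fun y : Fin (2*n) → ZMod 2 => ¬ wtV y < n))
          = (univ.filter (fun y : Fin (2*n) → ZMod 2 => wtV y = n))
            ∪ (univ.filter (fun y : Fin (2*n) → ZMod 2 => n + 1 ≤ wtV y)) := by
        rw [← Finset.filter_or]
        apply Finset.filter_congr
        intro y _
        constructor <;> intro hy <;> omega
      rw [heq, Finset.card_union_of_disjoint, card_wt, hP]
      rw [Finset.disjoint_left]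
      intro y hy1 hy2
      simp only [mem_filter, mem_univ, true_and] at hy1 hy2
      omega
    omega
  -- binomial identities
  have pascal : (2*n).choose n = (2*n-1).choose (n-1) + (2*n-1).choose n := by
    have h := Nat.choose_succ_succ' (2*n-1) (n-1)
    rw [show 2*n-1+1 = 2*n from by omega, show n-1+1 = n from by omega] at h
    exact h
  have hsymm : (2*n-1).choose (n-1) = (2*n-1).choose n := by
    have h := Nat.choose_symm (n := 2*n-1) (k := n) (by omega)
    rw [show 2*n-1-n = n-1 from by omega] at h
    exact h
  by_cases hw0 : w = 0
  · -- constant affine function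
    have hconst : ∀ x : Fin (2*n) → ZMod 2, (∑ i, w i * x i) + b = b := by
      intro x; simp [hw0]
    have hd2 : hdist f a = (univ.filter (fun x => f x ≠ b)).card := by
      rw [hdist_congr f a _ hab, hdist_eq_card]
      congr 1
      apply Finset.filter_congr
      intro x _
      rw [hconst x]
    rcases zmod2_cases b with hb | hb <;> rw [hb] at hd2
    · -- b = 0 : distance = #{f = 1} = #{wt ≥ t} ≥ P
      rw [hd2, hP]
      apply Finset.card_le_card
      intro y hy
      simp only [mem_filter, mem_univ, true_and] at hy ⊢
      rw [hf, maj, if_pos (by omega)]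
      decide
    · -- b = 1 : distance = #{f = 0} = #{wt < t} ≥ #{wt < n} = P
      rw [hd2, ← hQP]
      apply Finset.card_le_card
      intro y hy
      simp only [mem_filter, mem_univ, true_and] at hy ⊢
      rw [hf, maj, if_neg (by omega)]
      decide
  · -- non-constant affine function
    obtain ⟨i0, hi0⟩ := Function.ne_iff.mp hw0
    have hw1 : w i0 = 1 := by
      rcases zmod2_cases (w i0) with h | h
      · exact absurd h hi0
      · exact h
    have hp := pairing_bound f w b i0 hw1
    obtain ⟨d2, hd2⟩ : ∃ d2, hdist f (fun x => (∑ i, w i * x i) + b) = d2 := ⟨_, rfl⟩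
    have hgoal : hdist f a = d2 := by rw [hdist_congr f a _ hab, hd2]
    rw [hd2] at hp
    clear hd2
    have hΔ : (univ.filter (fun x => f x ≠ f (flip0 i0 x))).card
        = 2 * (2*n-1).choose (t-1) := by
      have hmd := maj_delta (N := 2*n) (s := t-1) i0
      rw [show t-1+1 = t from by omega] at hmd
      rw [← hmd]
      congr 1
      apply Finset.filter_congr
      intro x _
      rw [hf, hf]
    have hΔle : 2 * (2*n-1).choose (t-1) ≤ (2*n).choose n := by
      rcases Nat.eq_or_lt_of_le ht1 with h | h
      · rw [show t-1 = n-1 from by omega]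
        omega
      · rw [show t-1 = n from by omega]
        omega
    rw [hgoal]
    rw [hΔ] at hp
    omega

/-- `N(A(2n+1)) = N(M(2n)) = wt(A(2n+1))`. -/
theorem left_half_weight_eq_nonlinearity (n : ℕ) (hn : 2 ≤ n)
    (A : (Fin (2 * n) → ZMod 2) → ZMod 2)
    (hA : ∀ y, A y = maj (2 * n + 1) (n + 1) (Fin.cons (0 : ZMod 2) y)) :
    nlin A = nlin (maj (2 * n) n) ∧ nlin A = wtF A := by
  have hA' : ∀ y, A y = maj (2 * n) (n + 1) y := by
    intro y
    rw [hA y]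
    simp only [maj, wt_cons0]
  set P := (univ.filter (fun y : Fin (2*n) → ZMod 2 => n + 1 ≤ wtV y)).card with hP
  -- wtF A = P
  have hTP : wtF A = P := by
    rw [wtF, hP]
    congr 1
    apply Finset.filter_congr
    intro y _
    rw [hA' y, maj]
    split_ifs with h
    · simp [h]
    · simp only [h, iff_false]
      decide
  -- #{wt < n} = P
  have hQP : (univ.filter (fun y : Fin (2*n) → ZMod 2 => wtV y < n)).card = P := by
    have h := card_wt_lt (N := 2*n) (t := n) (by omega)
    rw [h, hP]
    congr 1
    apply Finset.filter_congr
    intro y _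
    constructor <;> intro hy <;> omega
  -- distance of A to the zero function is P
  have hdA : hdist A (fun _ => (0 : ZMod 2)) = P := by
    rw [hdist_eq_card, ← hTP, wtF]
    congr 1
    apply Finset.filter_congr
    intro y _
    rcases zmod2_cases (A y) with h | h <;> rw [h] <;> simp
  -- distance of M to the one function is P
  have hdM : hdist (maj (2*n) n) (fun _ => (1 : ZMod 2)) = P := by
    rw [hdist_eq_card, ← hQP]
    congr 1
    apply Finset.filter_congr
    intro y _
    rw [maj]
    split_ifs with h
    · constructor
      · intro h2; exact absurd rfl h2
      · intro h2; omega
    · constructor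
      · intro _; omega
      · intro _; decide
  have haff0 : IsAffine (fun _ : Fin (2*n) → ZMod 2 => (0 : ZMod 2)) :=
    ⟨0, 0, fun x => by simp⟩
  have haff1 : IsAffine (fun _ : Fin (2*n) → ZMod 2 => (1 : ZMod 2)) :=
    ⟨0, 1, fun x => by simp⟩
  have hnlinA : nlin A = P := by
    rw [nlin]
    have hmem : P ∈ {d : ℕ | ∃ a, IsAffine a ∧ d = hdist A a} :=
      ⟨_, haff0, hdA.symm⟩
    apply le_antisymm (Nat.sInf_le hmem)
    apply le_csInf ⟨P, hmem⟩
    rintro d ⟨a, ha, rfl⟩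
    exact maj_dist_lb n hn (n+1) (by omega) (by omega) A hA' a ha
  have hnlinM : nlin (maj (2*n) n) = P := by
    rw [nlin]
    have hmem : P ∈ {d : ℕ | ∃ a, IsAffine a ∧ d = hdist (maj (2*n) n) a} :=
      ⟨_, haff1, hdM.symm⟩
    apply le_antisymm (Nat.sInf_le hmem)
    apply le_csInf ⟨P, hmem⟩
    rintro d ⟨a, ha, rfl⟩
    exact maj_dist_lb n hn n (le_refl n) (by omega) (maj (2*n) n) (fun y => rfl) a ha
  exact ⟨by rw [hnlinA, hnlinM], by rw [hnlinA, hTP]⟩
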